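/- arXiv:2312.09029 — 5 statements merged into one kernel-verified Lean document; each statement's English description precedes it below -/
import Mathlib

section
/- Let X be a complex m × n matrix with all entries non-negative real numbers, and define λ ∈ ℝ^n by λ_j = ∑_s ∑_t X_{s,j} X_{s,t}. Then the positive semidefinite matrix P = X*X satisfies P ≤ Δ(λ) in the Loewner order, where Δ(λ) is the diagonal matrix with diagonal entries λ_j. -/
/-! Since X has nonnegative real entries, so does the Hermitian matrix A = Xᴴ X, and λ_j is the
j-th row sum of A. Thus Δ(λ) − A is the Laplacian of the weighted graph with weights A_jk, whose
quadratic form is ½ ∑_{j,k} A_jk |x_j − x_k|² ≥ 0. -/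

open Matrix
open scoped ComplexOrder

namespace Matrix

variable {n R 𝕜 : Type*} [Fintype n]

lemma dotProduct_diagonal_sum_sub_mulVec [DecidableEq n] [CommRing R] [StarRing R]
    (A : Matrix n n R) (x : n → R) :
    star x ⬝ᵥ (((diagonal fun j => ∑ k, A j k) - A) *ᵥ x) =
      ∑ j, ∑ k, A j k * (star (x j) * (x j - x k)) := by
  have hdiag : (diagonal fun j => ∑ k, A j k) *ᵥ x = fun j => ∑ k, A j k * x j :=
    funext fun j => by rw [mulVec_diagonal, Finset.sum_mul]
  rw [sub_mulVec, dotProduct_sub, hdiag]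
  simp only [dotProduct, mulVec, Pi.star_apply, Finset.mul_sum, ← Finset.sum_sub_distrib]
  refine Finset.sum_congr rfl fun j _ => Finset.sum_congr rfl fun k _ => ?_
  ring

lemma two_mul_sum_mul_star_mul_sub [CommRing R] [StarRing R] {a : n → n → R}
    (ha : ∀ j k, a k j = a j k) (x : n → R) :
    2 * ∑ j, ∑ k, a j k * (star (x j) * (x j - x k)) =
      ∑ j, ∑ k, a j k * (star (x j - x k) * (x j - x k)) := by
  have hswap : ∑ j, ∑ k, a j k * (star (x j) * (x j - x k)) =
      ∑ j, ∑ k, a j k * (star (x k) * (x k - x j)) := by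
    rw [Finset.sum_comm]
    simp only [ha]
  rw [two_mul]
  nth_rw 2 [hswap]
  simp only [← Finset.sum_add_distrib, star_sub]
  refine Finset.sum_congr rfl fun j _ => Finset.sum_congr rfl fun k _ => ?_
  ring

theorem posSemidef_diagonal_sum_sub_of_nonneg [DecidableEq n] [RCLike 𝕜] {A : Matrix n n 𝕜}
    (hA : A.IsHermitian) (hA0 : ∀ j k, 0 ≤ A j k) :
    ((diagonal fun j => ∑ k, A j k) - A).PosSemidef := by
  have hsymm : ∀ j k, A k j = A j k := fun j k => by
    rw [← hA.apply j k, (hA0 k j).isSelfAdjoint.star_eq]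
  refine posSemidef_iff_dotProduct_mulVec.2 ⟨?_, fun x => ?_⟩
  · refine .sub (isHermitian_diagonal_of_self_adjoint _ ?_) hA
    exact IsSelfAdjoint.of_nonneg (Pi.le_def.2 fun j => Finset.sum_nonneg fun k _ => hA0 j k)
  · have h2 : (0 : 𝕜) ≤ 2⁻¹ := by positivity
    rw [dotProduct_diagonal_sum_sub_mulVec, ← inv_mul_cancel_left₀ (two_ne_zero' 𝕜)
      (∑ j, ∑ k, _), two_mul_sum_mul_star_mul_sub hsymm]
    exact mul_nonneg h2 <| Finset.sum_nonneg fun j _ => Finset.sum_nonneg fun k _ =>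
      mul_nonneg (hA0 j k) (star_mul_self_nonneg _)

end Matrix

theorem stmt2 {m n : ℕ} (X : Matrix (Fin m) (Fin n) ℂ)
    (hX : ∀ i j, ∃ r : ℝ, 0 ≤ r ∧ X i j = (r : ℂ)) :
    (Matrix.diagonal (fun j => ∑ s, ∑ t, X s j * X s t) - Xᴴ * X).PosSemidef := by
  have hX0 : ∀ i j, 0 ≤ X i j := fun i j => by
    obtain ⟨r, hr, hXr⟩ := hX i j
    exact hXr ▸ Complex.zero_le_real.2 hr
  have hrow : (fun j => ∑ s, ∑ t, X s j * X s t) = fun j => ∑ t, (Xᴴ * X) j t := by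
    funext j
    simp only [mul_apply, conjTranspose_apply, (hX0 _ _).isSelfAdjoint.star_eq]
    exact Finset.sum_comm
  rw [hrow]
  exact posSemidef_diagonal_sum_sub_of_nonneg (isHermitian_conjTranspose_mul_self X)
    fun j k => Finset.sum_nonneg fun s _ => mul_nonneg (star_nonneg_iff.2 (hX0 s j)) (hX0 s k)
end

section
/- Let X be a complex m × n matrix (not all entries zero) and define λ_j = ∑_s ∑_t |X_{s,j}| |X_{s,t}|. Then X*X ≤ Δ(λ) in the Loewner order, where Δ(λ) is the diagonal matrix with entries λ_j. -/
open Matrix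
open scoped ComplexOrder

/-!
Row by row: `Xᴴ * X = ∑ₛ (Xₛ)ᴴ Xₛ`, and `Δ(λ)` splits accordingly, so it suffices to bound a
rank-one matrix `a* a` by `Δ(|aⱼ| ∑ₜ |aₜ|)`. For that, the triangle inequality and the
Cauchy–Schwarz inequality with weights `|aⱼ|` give
`|a ⬝ x|² ≤ (∑ⱼ |aⱼ| |xⱼ|)² ≤ (∑ₜ |aₜ|) ∑ⱼ |aⱼ| |xⱼ|²`.
-/

lemma conjTranspose_mul_self_eq_sum_vecMulVec {α ι κ : Type*} [NonUnitalNonAssocSemiring α]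
    [Star α] [Fintype κ] (X : Matrix κ ι α) :
    Xᴴ * X = ∑ s, vecMulVec (star (X s)) (X s) := by
  ext i j
  simp [mul_apply, Matrix.sum_apply, vecMulVec_apply]

lemma norm_dotProduct_sq_le_sum_norm_mul {R ι : Type*} [SeminormedRing R] [Fintype ι]
    (a x : ι → R) : ‖a ⬝ᵥ x‖ ^ 2 ≤ (∑ t, ‖a t‖) * ∑ j, ‖a j‖ * ‖x j‖ ^ 2 := by
  have h_tri : ‖a ⬝ᵥ x‖ ≤ ∑ j, ‖a j‖ * ‖x j‖ :=
    norm_sum_le_of_le _ fun j _ => norm_mul_le (a j) (x j)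
  calc ‖a ⬝ᵥ x‖ ^ 2 ≤ (∑ j, ‖a j‖ * ‖x j‖) ^ 2 := by gcongr
    _ ≤ (∑ t, ‖a t‖) * ∑ j, ‖a j‖ * ‖x j‖ ^ 2 :=
      Finset.sum_sq_le_sum_mul_sum_of_sq_le_mul _ (fun _ _ => norm_nonneg _)
        (fun _ _ => by positivity) (fun _ _ => le_of_eq (by ring))

section

variable {𝕜 ι : Type*} [RCLike 𝕜] [Fintype ι]

lemma star_dotProduct_diagonal_mulVec [DecidableEq ι] (d : ι → ℝ) (x : ι → 𝕜) :
    star x ⬝ᵥ (diagonal (fun j => (d j : 𝕜)) *ᵥ x) = ((∑ j, d j * ‖x j‖ ^ 2 : ℝ) : 𝕜) := by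
  push_cast
  refine Finset.sum_congr rfl fun j _ => ?_
  rw [mulVec_diagonal, Pi.star_apply, mul_left_comm, RCLike.star_def, RCLike.conj_mul]

lemma star_dotProduct_vecMulVec_mulVec (a x : ι → 𝕜) :
    star x ⬝ᵥ (vecMulVec (star a) a *ᵥ x) = ((‖a ⬝ᵥ x‖ ^ 2 : ℝ) : 𝕜) := by
  rw [vecMulVec_mulVec, dotProduct_smul, star_dotProduct_star, op_smul_eq_mul, RCLike.star_def,
    RCLike.conj_mul, RCLike.ofReal_pow]

theorem posSemidef_diagonal_sub_vecMulVec_star_self [DecidableEq ι] (a : ι → 𝕜) :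
    (diagonal (fun j => ((‖a j‖ * ∑ t, ‖a t‖ : ℝ) : 𝕜)) - vecMulVec (star a) a).PosSemidef := by
  refine posSemidef_iff_dotProduct_mulVec.2 ⟨?_, fun x => ?_⟩
  · exact (isHermitian_diagonal_of_self_adjoint _ (funext fun j => RCLike.conj_ofReal _)).sub
      (posSemidef_vecMulVec_star_self a).isHermitian
  rw [sub_mulVec, dotProduct_sub, star_dotProduct_diagonal_mulVec,
    star_dotProduct_vecMulVec_mulVec, ← RCLike.ofReal_sub, RCLike.ofReal_nonneg, sub_nonneg]
  calc ‖a ⬝ᵥ x‖ ^ 2 ≤ (∑ t, ‖a t‖) * ∑ j, ‖a j‖ * ‖x j‖ ^ 2 :=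
        norm_dotProduct_sq_le_sum_norm_mul a x
    _ = ∑ j, ‖a j‖ * (∑ t, ‖a t‖) * ‖x j‖ ^ 2 := by
        rw [Finset.mul_sum]
        exact Finset.sum_congr rfl fun _ _ => by ring

end

theorem stmt3_general {m n : ℕ} (X : Matrix (Fin m) (Fin n) ℂ) :
    (Matrix.diagonal (fun j => ((∑ s, ∑ t, ‖X s j‖ * ‖X s t‖ : ℝ) : ℂ)) - Xᴴ * X).PosSemidef := by
  have h_diag : Matrix.diagonal (fun j => ((∑ s, ∑ t, ‖X s j‖ * ‖X s t‖ : ℝ) : ℂ)) =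
      ∑ s, diagonal (fun j => ((‖X s j‖ * ∑ t, ‖X s t‖ : ℝ) : ℂ)) := by
    simp_rw [← diagonalAddMonoidHom_apply, ← map_sum, Finset.mul_sum, Complex.ofReal_sum,
      Finset.sum_fn]
  rw [h_diag, conjTranspose_mul_self_eq_sum_vecMulVec, ← Finset.sum_sub_distrib]
  exact posSemidef_sum _ fun s _ => posSemidef_diagonal_sub_vecMulVec_star_self (X s)

theorem stmt3 {m n : ℕ} (X : Matrix (Fin m) (Fin n) ℂ) (hX : X ≠ 0) :
    (Matrix.diagonal (fun j => ((∑ s, ∑ t, ‖X s j‖ * ‖X s t‖ : ℝ) : ℂ)) - Xᴴ * X).PosSemidef :=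
  stmt3_general X
end

section
/- Let Q be a positive semidefinite n × n complex matrix with all diagonal entries at most 1. Then the Schur multiplier norm of Q is at most 1, i.e., for every n × n complex matrix A, ‖Q ∘ A‖_op ≤ ‖A‖_op, where ∘ denotes the entrywise product. -/
/-!
Factor `Q = Bᴴ B` and let `b_k` be the `k`-th row of `B`. Then
`⟪y, (Q ∘ A) x⟫ = ∑ k, ⟪b_k ∘ y, A (b_k ∘ x)⟫`, so by Cauchy–Schwarz
`|⟪y, (Q ∘ A) x⟫| ≤ ‖A‖ (∑ k, ‖b_k ∘ y‖²)^½ (∑ k, ‖b_k ∘ x‖²)^½`, and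
`∑ k, ‖b_k ∘ x‖² = ∑ j, Q j j |x j|² ≤ ‖x‖²`.
-/

open Matrix
open scoped ComplexOrder

noncomputable def l2norm {ι : Type*} [Fintype ι] (v : ι → ℂ) : ℝ :=
  Real.sqrt (∑ i, ‖v i‖ ^ 2)

noncomputable def opNorm {ι κ : Type*} [Fintype ι] [Fintype κ] (X : Matrix ι κ ℂ) : ℝ :=
  sSup {r : ℝ | ∃ z : κ → ℂ, l2norm z ≤ 1 ∧ r = l2norm (X.mulVec z)}

open scoped Matrix.Norms.L2Operator MatrixOrder

lemma l2norm_eq_norm_toLp {ι : Type*} [Fintype ι] (v : ι → ℂ) :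
    l2norm v = ‖WithLp.toLp 2 v‖ := by
  rw [EuclideanSpace.norm_eq]
  rfl

lemma opNorm_eq_l2_opNorm {ι κ : Type*} [Fintype ι] [Fintype κ] [DecidableEq κ]
    (X : Matrix ι κ ℂ) : opNorm X = ‖X‖ := by
  rw [l2_opNorm_def, ← ContinuousLinearMap.sSup_unitClosedBall_eq_norm, opNorm]
  congr 1
  ext r
  constructor
  · rintro ⟨z, hz, rfl⟩
    refine ⟨WithLp.toLp 2 z, ?_, ?_⟩
    · simpa [l2norm_eq_norm_toLp] using hz
    · simp [l2norm_eq_norm_toLp]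
  · rintro ⟨x, hx, rfl⟩
    refine ⟨x.ofLp, ?_, ?_⟩
    · simpa [l2norm_eq_norm_toLp] using hx
    · simp [l2norm_eq_norm_toLp]
      rfl

lemma star_dotProduct_hadamard_mulVec {R κ m n : Type*} [Fintype κ] [Fintype m] [Fintype n]
    [CommSemiring R] [StarRing R] (B : Matrix κ m R) (C : Matrix κ n R) (A : Matrix m n R)
    (x : n → R) (y : m → R) :
    star y ⬝ᵥ ((Bᴴ * C) ⊙ A) *ᵥ x = ∑ k : κ, star (B k * y) ⬝ᵥ A *ᵥ (C k * x) := by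
  simp only [dotProduct, mulVec, hadamard_apply, mul_apply, conjTranspose_apply, Pi.star_apply,
    Pi.mul_apply, star_mul, Finset.mul_sum, Finset.sum_mul]
  conv_lhs => enter [2, i]; rw [Finset.sum_comm]
  rw [Finset.sum_comm]
  exact Finset.sum_congr rfl fun _ _ => Finset.sum_congr rfl fun _ _ =>
    Finset.sum_congr rfl fun _ _ => by ring

lemma sum_norm_sq_eq_re_conjTranspose_mul_self_apply {𝕜 κ n : Type*} [RCLike 𝕜] [Fintype κ]
    (B : Matrix κ n 𝕜) (j : n) : ∑ k, ‖B k j‖ ^ 2 = RCLike.re ((Bᴴ * B) j j) := by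
  simp [mul_apply, RCLike.conj_mul]

section

variable {𝕜 κ m n : Type*} [RCLike 𝕜] [Fintype κ] [Fintype m] [Fintype n]

lemma star_dotProduct_eq_inner (y z : m → 𝕜) :
    star y ⬝ᵥ z = inner 𝕜 (WithLp.toLp 2 y) (WithLp.toLp 2 z) := by
  rw [EuclideanSpace.inner_toLp_toLp, dotProduct_comm]

lemma norm_star_dotProduct_mulVec_le [DecidableEq n] (A : Matrix m n 𝕜) (x : n → 𝕜)
    (y : m → 𝕜) :
    ‖star y ⬝ᵥ A *ᵥ x‖ ≤ ‖A‖ * (‖WithLp.toLp 2 y‖ * ‖WithLp.toLp 2 x‖) := by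
  rw [star_dotProduct_eq_inner]
  calc _ ≤ ‖WithLp.toLp 2 y‖ * ‖WithLp.toLp 2 (A *ᵥ x)‖ := norm_inner_le_norm _ _
    _ ≤ ‖WithLp.toLp 2 y‖ * (‖A‖ * ‖WithLp.toLp 2 x‖) := by
      gcongr
      exact A.l2_opNorm_mulVec (WithLp.toLp 2 x)
    _ = _ := by ring

lemma l2_opNorm_le_of_forall_norm_star_dotProduct_mulVec_le [DecidableEq n] {M : Matrix m n 𝕜}
    {C : ℝ} (hC : 0 ≤ C)
    (h : ∀ x y, ‖star y ⬝ᵥ M *ᵥ x‖ ≤ C * (‖WithLp.toLp 2 y‖ * ‖WithLp.toLp 2 x‖)) :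
    ‖M‖ ≤ C := by
  rw [l2_opNorm_def]
  refine ContinuousLinearMap.opNorm_le_bound _ hC fun x => ?_
  have hMx := h x.ofLp (M *ᵥ x.ofLp)
  rw [star_dotProduct_eq_inner, inner_self_eq_norm_sq_to_K, norm_pow, RCLike.norm_ofReal,
    abs_norm, WithLp.toLp_ofLp] at hMx
  change ‖WithLp.toLp 2 (M *ᵥ x.ofLp)‖ ≤ C * ‖x‖
  nlinarith [mul_nonneg hC (norm_nonneg x)]

lemma sum_norm_sq_toLp_mul_le {B : Matrix κ n 𝕜} (hB : ∀ j, ∑ k, ‖B k j‖ ^ 2 ≤ 1)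
    (x : n → 𝕜) : ∑ k, ‖WithLp.toLp 2 (B k * x)‖ ^ 2 ≤ ‖WithLp.toLp 2 x‖ ^ 2 := by
  simp only [EuclideanSpace.norm_sq_eq, Pi.mul_apply, norm_mul, mul_pow]
  rw [Finset.sum_comm]
  refine Finset.sum_le_sum fun j _ => ?_
  rw [← Finset.sum_mul]
  exact mul_le_of_le_one_left (sq_nonneg _) (hB j)

lemma sum_norm_toLp_mul_mul_le {B : Matrix κ n 𝕜} (hB : ∀ j, ∑ k, ‖B k j‖ ^ 2 ≤ 1)
    (x y : n → 𝕜) :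
    ∑ k, ‖WithLp.toLp 2 (B k * y)‖ * ‖WithLp.toLp 2 (B k * x)‖
      ≤ ‖WithLp.toLp 2 y‖ * ‖WithLp.toLp 2 x‖ := by
  refine (Real.sum_mul_le_sqrt_mul_sqrt _ _ _).trans ?_
  gcongr <;> exact Real.sqrt_le_iff.mpr ⟨norm_nonneg _, sum_norm_sq_toLp_mul_le hB _⟩

end

theorem l2_opNorm_hadamard_le_of_posSemidef {𝕜 ι : Type*} [RCLike 𝕜] [Fintype ι] [DecidableEq ι]
    {Q : Matrix ι ι 𝕜} (hQ : Q.PosSemidef) (hdiag : ∀ j, RCLike.re (Q j j) ≤ 1)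
    (A : Matrix ι ι 𝕜) : ‖Q ⊙ A‖ ≤ ‖A‖ := by
  obtain ⟨B, rfl⟩ := CStarAlgebra.nonneg_iff_eq_star_mul_self.mp hQ.nonneg
  rw [star_eq_conjTranspose] at hdiag ⊢
  have hB : ∀ j, ∑ k, ‖B k j‖ ^ 2 ≤ 1 := fun j =>
    (sum_norm_sq_eq_re_conjTranspose_mul_self_apply B j).trans_le (hdiag j)
  refine l2_opNorm_le_of_forall_norm_star_dotProduct_mulVec_le (norm_nonneg A) fun x y => ?_
  rw [star_dotProduct_hadamard_mulVec]
  calc _ ≤ ∑ k, ‖A‖ * (‖WithLp.toLp 2 (B k * y)‖ * ‖WithLp.toLp 2 (B k * x)‖) :=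
        norm_sum_le_of_le _ fun k _ => norm_star_dotProduct_mulVec_le A _ _
    _ ≤ ‖A‖ * (‖WithLp.toLp 2 y‖ * ‖WithLp.toLp 2 x‖) := by
        rw [← Finset.mul_sum]
        gcongr
        exact sum_norm_toLp_mul_mul_le hB x y

theorem stmt11 {n : ℕ} (Q : Matrix (Fin n) (Fin n) ℂ) (hQ : Q.PosSemidef)
    (hdiag : ∀ j, (Q j j).re ≤ 1) (A : Matrix (Fin n) (Fin n) ℂ) :
    opNorm (Matrix.of fun i j => Q i j * A i j) ≤ opNorm A := by
  rw [opNorm_eq_l2_opNorm, opNorm_eq_l2_opNorm]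
  exact l2_opNorm_hadamard_le_of_posSemidef hQ hdiag A
end

section
/- Let P be a positive semidefinite n × n complex matrix. Then there exists a vector u ∈ ℂ^n with |u_j| = 1 for all j (i.e., a unitary element of the diagonal algebra) such that Tr(P · R) = ‖P‖_B, where R is the rank-one matrix R_{i,j} = u_i · conj(u_j), and ‖P‖_B = sup { |∑ P_{i,j} a_i b_j| : ‖a‖_∞ ≤ 1, ‖b‖_∞ ≤ 1 }. -/
open Matrix
open scoped ComplexOrder

noncomputable def normB {m n : ℕ} (X : Matrix (Fin m) (Fin n) ℂ) : ℝ :=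
  sSup {r : ℝ | ∃ (a : Fin m → ℂ) (b : Fin n → ℂ), (∀ i, ‖a i‖ ≤ 1) ∧ (∀ j, ‖b j‖ ≤ 1) ∧
    r = ‖∑ i, ∑ j, X i j * a i * b j‖}

private lemma half_point (d : ℂ) (hd : ‖d‖ ≤ 1) :
    ∃ z w : ℂ, ‖z‖ = 1 ∧ ‖w‖ = 1 ∧ d = (z + w) / 2 := by
  rcases eq_or_ne d 0 with h | h
  · exact ⟨1, -1, by simp, by simp, by simp [h]⟩
  · set u : ℂ := d / ‖d‖ with hu
    have hnd : (0:ℝ) < ‖d‖ := norm_pos_iff.mpr h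
    have hus : ‖u‖ = 1 := by
      simp only [hu, norm_div, Complex.norm_real, Real.norm_eq_abs, abs_of_pos hnd]
      exact div_self hnd.ne'
    set s : ℝ := Real.sqrt (1 - ‖d‖ ^ 2) with hs
    have hsq : s ^ 2 = 1 - ‖d‖ ^ 2 := by
      rw [hs, Real.sq_sqrt]
      nlinarith
    have hmix : ‖(‖d‖ : ℂ) + (s : ℂ) * Complex.I‖ = 1 := by
      rw [Complex.norm_add_mul_I]
      rw [hsq]; simp
    have hmix' : ‖(‖d‖ : ℂ) - (s : ℂ) * Complex.I‖ = 1 := by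
      have : (‖d‖ : ℂ) - (s : ℂ) * Complex.I = (‖d‖ : ℂ) + ((-s : ℝ) : ℂ) * Complex.I := by
        push_cast; ring
      rw [this, Complex.norm_add_mul_I]
      rw [neg_pow, hsq]; simp
    refine ⟨u * ((‖d‖ : ℂ) + (s : ℂ) * Complex.I), u * ((‖d‖ : ℂ) - (s : ℂ) * Complex.I),
      ?_, ?_, ?_⟩
    · rw [norm_mul, hus, hmix, one_mul]
    · rw [norm_mul, hus, hmix', one_mul]
    · have h2 : u * ((‖d‖ : ℂ) + (s : ℂ) * Complex.I) + u * ((‖d‖ : ℂ) - (s : ℂ) * Complex.I)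
          = 2 * (u * (‖d‖ : ℂ)) := by ring
      rw [h2]
      have h3 : u * (‖d‖ : ℂ) = d := by
        rw [hu, div_mul_eq_mul_div, mul_div_assoc, div_self, mul_one]
        exact_mod_cast hnd.ne'
      rw [h3]; ring

private lemma herm_swap {n : ℕ} {P : Matrix (Fin n) (Fin n) ℂ} (hP : P.IsHermitian)
    (x y : Fin n → ℂ) :
    star y ⬝ᵥ P *ᵥ x = (starRingEnd ℂ) (star x ⬝ᵥ P *ᵥ y) := by
  simp only [dotProduct, mulVec, dotProduct, Pi.star_apply, map_sum, _root_.map_mul,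
    Complex.conj_conj, Finset.mul_sum, RCLike.star_def]
  rw [Finset.sum_comm]
  refine Finset.sum_congr rfl fun i _ => Finset.sum_congr rfl fun j _ => ?_
  rw [← hP.apply i j, RCLike.star_def, Complex.conj_conj]
  ring

private lemma quad_re_nonneg {n : ℕ} {P : Matrix (Fin n) (Fin n) ℂ} (hP : P.PosSemidef)
    (x : Fin n → ℂ) : 0 ≤ (star x ⬝ᵥ P *ᵥ x).re :=
  (Complex.le_def.mp (hP.dotProduct_mulVec_nonneg x)).1

private lemma quad_im_zero {n : ℕ} {P : Matrix (Fin n) (Fin n) ℂ} (hP : P.PosSemidef)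
    (x : Fin n → ℂ) : (star x ⬝ᵥ P *ᵥ x).im = 0 :=
  ((Complex.le_def.mp (hP.dotProduct_mulVec_nonneg x)).2).symm

private lemma cs_half {n : ℕ} {P : Matrix (Fin n) (Fin n) ℂ} (hP : P.PosSemidef)
    (x y : Fin n → ℂ) :
    ‖star x ⬝ᵥ P *ᵥ y‖ ≤ ((star x ⬝ᵥ P *ᵥ x).re + (star y ⬝ᵥ P *ᵥ y).re) / 2 := by
  set t : ℂ := star x ⬝ᵥ P *ᵥ y with ht
  rcases eq_or_ne t 0 with h0 | h0
  · rw [h0, norm_zero]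
    have := quad_re_nonneg hP x
    have := quad_re_nonneg hP y
    linarith
  · set c : ℂ := t / ‖t‖ with hc
    have hnt : (0:ℝ) < ‖t‖ := norm_pos_iff.mpr h0
    have hc1 : ‖c‖ = 1 := by
      simp only [hc, norm_div, Complex.norm_real, Real.norm_eq_abs, abs_of_pos hnt]
      exact div_self hnt.ne'
    have hcc : (starRingEnd ℂ) c * c = 1 := by
      rw [mul_comm, Complex.mul_conj, Complex.normSq_eq_norm_sq, hc1]
      norm_num
    have hct : (starRingEnd ℂ) c * t = (‖t‖ : ℂ) := by
      have hne : ((‖t‖ : ℝ) : ℂ) ≠ 0 := Complex.ofReal_ne_zero.mpr hnt.ne'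
      rw [hc, map_div₀, Complex.conj_ofReal, div_mul_eq_mul_div, mul_comm,
        Complex.mul_conj, Complex.normSq_eq_norm_sq,
        Complex.ofReal_pow, sq, mul_div_assoc, div_self hne, mul_one]
    have hct' : c * (starRingEnd ℂ) t = (‖t‖ : ℂ) := by
      have h := congrArg (starRingEnd ℂ) hct
      rw [_root_.map_mul, Complex.conj_conj, Complex.conj_ofReal] at h
      linear_combination h
    set v : Fin n → ℂ := c • x - y with hv
    have hexp : star v ⬝ᵥ P *ᵥ v
        = ((starRingEnd ℂ) c * c) * (star x ⬝ᵥ P *ᵥ x) - (starRingEnd ℂ) c * t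
          - c * (starRingEnd ℂ) t + (star y ⬝ᵥ P *ᵥ y) := by
      rw [hv, ht]
      simp only [star_sub, star_smul, Matrix.mulVec_sub, Matrix.mulVec_smul,
        sub_dotProduct, dotProduct_sub, smul_dotProduct, dotProduct_smul, smul_eq_mul,
        RCLike.star_def]
      rw [herm_swap hP.1 y x]
      simp only [Complex.conj_conj]
      ring
    have h0' := (Complex.le_def.mp (hP.dotProduct_mulVec_nonneg v)).1
    rw [hexp, hcc, hct, hct', one_mul] at h0'
    simp only [Complex.add_re, Complex.sub_re, Complex.ofReal_re, Complex.zero_re] at h0'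
    linarith

private lemma quad_le_max {n : ℕ} {P : Matrix (Fin n) (Fin n) ℂ} (hP : P.PosSemidef)
    {M : ℝ} (hM : ∀ v : Fin n → ℂ, (∀ j, ‖v j‖ = 1) → (star v ⬝ᵥ P *ᵥ v).re ≤ M)
    (x : Fin n → ℂ) (hx : ∀ j, ‖x j‖ ≤ 1) : (star x ⬝ᵥ P *ᵥ x).re ≤ M := by
  choose z w hz hw hzw using fun j => half_point (x j) (hx j)
  have hx2 : (2 : ℂ) • x = z + w := by
    funext j
    simp only [Pi.smul_apply, Pi.add_apply, smul_eq_mul, hzw j]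
    ring
  have hexp : (4 : ℂ) * (star x ⬝ᵥ P *ᵥ x)
      = (star z ⬝ᵥ P *ᵥ z) + (star z ⬝ᵥ P *ᵥ w) + (star w ⬝ᵥ P *ᵥ z)
        + (star w ⬝ᵥ P *ᵥ w) := by
    have h4 : (4 : ℂ) * (star x ⬝ᵥ P *ᵥ x)
        = star ((2:ℂ) • x) ⬝ᵥ P *ᵥ ((2:ℂ) • x) := by
      simp only [star_smul, Matrix.mulVec_smul, smul_dotProduct, dotProduct_smul,
        smul_eq_mul, RCLike.star_def, Complex.conj_ofNat]
      ring
    rw [h4, hx2]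
    simp only [star_add, Matrix.mulVec_add, add_dotProduct, dotProduct_add]
    ring
  have hre := congrArg Complex.re hexp
  simp only [Complex.add_re, Complex.mul_re, Complex.re_ofNat, Complex.im_ofNat,
    zero_mul, sub_zero] at hre
  have hwz : (star w ⬝ᵥ P *ᵥ z).re = (star z ⬝ᵥ P *ᵥ w).re := by
    rw [herm_swap hP.1 w z, Complex.conj_re]
  have hzw_le : (star z ⬝ᵥ P *ᵥ w).re ≤ ((star z ⬝ᵥ P *ᵥ z).re + (star w ⬝ᵥ P *ᵥ w).re) / 2 :=
    le_trans (Complex.re_le_norm _) (le_trans le_rfl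
      (cs_half hP z w))
  have hMz := hM z hz
  have hMw := hM w hw
  linarith [hwz ▸ hzw_le]

theorem stmt12 {n : ℕ} (P : Matrix (Fin n) (Fin n) ℂ) (hP : P.PosSemidef) :
    ∃ u : Fin n → ℂ, (∀ j, ‖u j‖ = 1) ∧
      (P * Matrix.of fun i j => u i * (starRingEnd ℂ) (u j)).trace = (normB P : ℂ) := by
  classical
  -- maximize the quadratic form over the torus
  set K : Set (Fin n → ℂ) := {v | ∀ j, ‖v j‖ = 1} with hK
  have hKc : IsCompact K := by
    have : K = Set.pi Set.univ (fun _ : Fin n => Metric.sphere (0:ℂ) 1) := by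
      ext v
      simp [hK, Set.mem_pi, dist_zero_right]
    rw [this]
    exact isCompact_univ_pi fun _ => isCompact_sphere 0 1
  have hKne : K.Nonempty := ⟨fun _ => 1, fun j => by simp⟩
  have hcont : ContinuousOn (fun v : Fin n → ℂ => (star v ⬝ᵥ P *ᵥ v).re) K := by
    apply Continuous.continuousOn
    apply Complex.continuous_re.comp
    simp only [dotProduct, mulVec, Pi.star_apply]
    exact continuous_finset_sum _ fun i _ =>
      ((Complex.continuous_conj.comp (continuous_apply i)).mul
        (continuous_finset_sum _ fun j _ => continuous_const.mul (continuous_apply j)))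
  obtain ⟨u, huK, hmax'⟩ := hKc.exists_isMaxOn hKne hcont
  have hmax : ∀ v ∈ K, (star v ⬝ᵥ P *ᵥ v).re ≤ (star u ⬝ᵥ P *ᵥ u).re := fun v hv => hmax' hv
  set M : ℝ := (star u ⬝ᵥ P *ᵥ u).re with hM
  have hub : ∀ r ∈ {r : ℝ | ∃ (a : Fin n → ℂ) (b : Fin n → ℂ), (∀ i, ‖a i‖ ≤ 1) ∧
      (∀ j, ‖b j‖ ≤ 1) ∧ r = ‖∑ i, ∑ j, P i j * a i * b j‖}, r ≤ M := by
    rintro r ⟨a, b, ha, hb, rfl⟩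
    have hrewrite : ∑ i, ∑ j, P i j * a i * b j = star (star a) ⬝ᵥ P *ᵥ b := by
      simp only [star_star, dotProduct, mulVec, Finset.mul_sum]
      exact Finset.sum_congr rfl fun i _ => Finset.sum_congr rfl fun j _ => by ring
    rw [hrewrite]
    have h1 := cs_half hP (star a) b
    have h2 := quad_le_max hP (fun v hv => hmax v hv) (star a) (fun j => by
      simpa using ha j)
    have h3 := quad_le_max hP (fun v hv => hmax v hv) b hb
    linarith
  have hmem : M ∈ {r : ℝ | ∃ (a : Fin n → ℂ) (b : Fin n → ℂ), (∀ i, ‖a i‖ ≤ 1) ∧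
      (∀ j, ‖b j‖ ≤ 1) ∧ r = ‖∑ i, ∑ j, P i j * a i * b j‖} := by
    refine ⟨star u, u, fun i => by simpa using (huK i).le, fun j => (huK j).le, ?_⟩
    have hrewrite : ∑ i, ∑ j, P i j * (star u) i * u j = star u ⬝ᵥ P *ᵥ u := by
      simp only [dotProduct, mulVec, Finset.mul_sum, Pi.star_apply]
      exact Finset.sum_congr rfl fun i _ => Finset.sum_congr rfl fun j _ => by ring
    rw [hrewrite]
    have him := quad_im_zero hP u
    have hre := quad_re_nonneg hP u
    have : star u ⬝ᵥ P *ᵥ u = ((M : ℝ) : ℂ) := by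
      apply Complex.ext <;> simp [hM, him]
    rw [this, Complex.norm_real, Real.norm_eq_abs, abs_of_nonneg hre]
  have hsup : normB P = M := by
    unfold normB
    exact le_antisymm (csSup_le ⟨M, hmem⟩ hub) (le_csSup ⟨M, hub⟩ hmem)
  refine ⟨u, huK, ?_⟩
  have htr : (P * Matrix.of fun i j => u i * (starRingEnd ℂ) (u j)).trace
      = star u ⬝ᵥ P *ᵥ u := by
    simp only [Matrix.trace, Matrix.diag, Matrix.mul_apply, Matrix.of_apply,
      dotProduct, mulVec, Pi.star_apply, Finset.mul_sum, RCLike.star_def]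
    exact Finset.sum_congr rfl fun i _ => Finset.sum_congr rfl fun j _ => by ring
  rw [htr, hsup]
  apply Complex.ext <;> simp [hM, quad_im_zero hP u]
end

section
/- Let 1 < k < 2 be a real constant and suppose that for every n and every Q ∈ Q_n there exist R ∈ R_n and P positive semidefinite with Q = k·R − P (so that Q_n ⊆ k·R_n − PSD_n). Then for every Q ∈ Q_n there exist R₊, R₋ ∈ R_n with Q = (1/(2−k))·R₊ − ((k−1)/(2−k))·R₋. -/
open Matrix
open scoped ComplexOrder

def Qset (n : ℕ) : Set (Matrix (Fin n) (Fin n) ℂ) :=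
  {X | X.PosSemidef ∧ ∀ j, X j j = 1}

noncomputable def Rset (n : ℕ) : Set (Matrix (Fin n) (Fin n) ℂ) :=
  closure (convexHull ℝ {X | ∃ u : Fin n → ℂ, (∀ j, ‖u j‖ = 1) ∧
    X = Matrix.of fun i j => (starRingEnd ℂ) (u i) * u j})

/-!
Write `a = 1 / (2 - k)`, `b = (k - 1) / (2 - k)` and `C = a • R_n - b • R_n`, a compact set.
Since `R_n` is convex, every map `c ↦ k • R - (k - 1) • c` with `R ∈ R_n` sends `C` into itself:
`k • R - (k - 1) • (a • R₊ - b • R₋) = a • (k (2 - k) • R + (k - 1) ^ 2 • R₋) - b • R₊`,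
and `k (2 - k) + (k - 1) ^ 2 = 1`. By hypothesis every `Q ∈ Q_n` is the image of some `Q' ∈ Q_n`
under such a map, which contracts distances by the factor `k - 1 < 1`. As `Q_n` is bounded,
iterating shows that the distance from `Q` to `C` is at most `(k - 1) ^ m` times a constant for
every `m`, so `Q ∈ C`.
-/

open Set Metric Filter Topology
open scoped NNReal

theorem Matrix.PosSemidef.apply_mul_star_apply_le {𝕜 ι : Type*} [RCLike 𝕜] [Fintype ι]
    {A : Matrix ι ι 𝕜} (hA : A.PosSemidef) (i j : ι) : A i j * star (A i j) ≤ A i i * A j j := by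
  have hdet := (hA.submatrix ![i, j]).det_nonneg
  rw [det_fin_two] at hdet
  simpa [← hA.1.apply j i] using hdet

theorem subset_of_forall_eq_lipschitzWith_apply {α : Type*} [PseudoMetricSpace α] {S C : Set α}
    {K : ℝ≥0} (hK : K < 1) (hS : Bornology.IsBounded S) (hC : IsClosed C) (hCne : C.Nonempty)
    (h : ∀ x ∈ S, ∃ y ∈ S, ∃ g : α → α, LipschitzWith K g ∧ MapsTo g C C ∧ g y = x) :
    S ⊆ C := by
  obtain ⟨c₀, hc₀⟩ := hCne
  obtain ⟨D, hD⟩ := hS.subset_closedBall c₀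
  have approx : ∀ m : ℕ, ∀ x ∈ S, ∃ c ∈ C, dist x c ≤ K ^ m * D := by
    intro m
    induction m with
    | zero => exact fun x hx => ⟨c₀, hc₀, by simpa using hD hx⟩
    | succ m ih =>
      intro x hx
      obtain ⟨y, hy, g, hg, hgC, rfl⟩ := h x hx
      obtain ⟨c, hc, hyc⟩ := ih y hy
      refine ⟨g c, hgC hc, ?_⟩
      calc dist (g y) (g c) ≤ K * dist y c := hg.dist_le_mul y c
        _ ≤ K * (K ^ m * D) := by gcongr
        _ = K ^ (m + 1) * D := by ring
  intro x hx
  have hlim : Tendsto (fun m : ℕ => (K : ℝ) ^ m * D) atTop (𝓝 0) := by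
    simpa using (tendsto_pow_atTop_nhds_zero_of_lt_one K.2 hK).mul_const D
  have hdist : infDist x C ≤ 0 := by
    refine ge_of_tendsto' hlim fun m => ?_
    obtain ⟨c, hc, hxc⟩ := approx m x hx
    exact (infDist_le_dist_of_mem hc).trans hxc
  exact (hC.mem_iff_infDist_zero ⟨c₀, hc₀⟩).2 (hdist.antisymm infDist_nonneg)

theorem Convex.exists_smul_sub_smul_eq {E : Type*} [AddCommGroup E] [Module ℝ E] {s : Set E}
    (hs : Convex ℝ s) {k : ℝ} (hk0 : 0 ≤ k) (hk2 : k < 2) {x p m : E} (hx : x ∈ s) (hp : p ∈ s)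
    (hm : m ∈ s) : ∃ p' ∈ s, ∃ m' ∈ s, (1 / (2 - k)) • p' - ((k - 1) / (2 - k)) • m' =
      k • x - (k - 1) • ((1 / (2 - k)) • p - ((k - 1) / (2 - k)) • m) := by
  have h2k : 2 - k ≠ 0 := by linarith
  refine ⟨(k * (2 - k)) • x + ((k - 1) ^ 2) • m,
    hs hx hm (mul_nonneg hk0 (by linarith)) (sq_nonneg _) (by ring), p, hp, ?_⟩
  match_scalars <;> field_simp

attribute [local instance] Matrix.normedAddCommGroup Matrix.normedSpace

theorem norm_apply_le_one_of_mem_Qset {n : ℕ} {X : Matrix (Fin n) (Fin n) ℂ} (hX : X ∈ Qset n)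
    (i j : Fin n) : ‖X i j‖ ≤ 1 := by
  have h := hX.1.apply_mul_star_apply_le i j
  rw [hX.2 i, hX.2 j, one_mul, Complex.star_def, RCLike.mul_conj, ← RCLike.ofReal_pow,
    ← RCLike.ofReal_one, RCLike.ofReal_le_ofReal] at h
  exact (pow_le_one_iff_of_nonneg (norm_nonneg _) two_ne_zero).1 h

theorem isBounded_Qset (n : ℕ) : Bornology.IsBounded (Qset n) :=
  isBounded_iff_forall_norm_le.2 ⟨1, fun _ hX => (norm_le_iff zero_le_one).2
    (norm_apply_le_one_of_mem_Qset hX)⟩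

theorem Rset_subset_of_convex_of_isClosed {n : ℕ} {s : Set (Matrix (Fin n) (Fin n) ℂ)}
    (hconv : Convex ℝ s) (hclosed : IsClosed s)
    (hbase : ∀ u : Fin n → ℂ, (∀ j, ‖u j‖ = 1) →
      (Matrix.of fun i j => (starRingEnd ℂ) (u i) * u j) ∈ s) :
    Rset n ⊆ s := by
  refine closure_minimal (convexHull_min ?_ hconv) hclosed
  rintro X ⟨u, hu, rfl⟩
  exact hbase u hu

theorem convex_Rset (n : ℕ) : Convex ℝ (Rset n) :=
  (convex_convexHull ℝ _).closure

theorem Rset_nonempty (n : ℕ) : (Rset n).Nonempty :=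
  ⟨_, subset_closure (subset_convexHull ℝ _ ⟨fun _ => 1, fun _ => norm_one, rfl⟩)⟩

theorem apply_self_eq_one_of_mem_Rset {n : ℕ} {R : Matrix (Fin n) (Fin n) ℂ} (hR : R ∈ Rset n)
    (j : Fin n) : R j j = 1 := by
  refine Rset_subset_of_convex_of_isClosed (s := entryLinearMap ℝ ℂ j j ⁻¹' {1})
    ((convex_singleton 1).linear_preimage _)
    (isClosed_singleton.preimage ((continuous_apply j).comp (continuous_apply j))) ?_ hR
  intro u hu
  simp [mul_comm, Complex.mul_conj, Complex.normSq_eq_norm_sq, hu j]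

theorem Rset_subset_closedBall (n : ℕ) : Rset n ⊆ closedBall 0 1 := by
  refine Rset_subset_of_convex_of_isClosed (convex_closedBall _ _) isClosed_closedBall
    fun u hu => ?_
  rw [mem_closedBall_zero_iff, norm_le_iff zero_le_one]
  intro i j
  simp [hu i, hu j]

theorem isCompact_Rset (n : ℕ) : IsCompact (Rset n) :=
  isCompact_of_isClosed_isBounded isClosed_closure
    (isBounded_closedBall.subset (Rset_subset_closedBall n))

theorem exists_mem_Qset_eq_smul_sub_smul {n : ℕ} {k : ℝ} (hk : 1 < k)
    {Q R P : Matrix (Fin n) (Fin n) ℂ} (hQ : Q ∈ Qset n) (hR : R ∈ Rset n) (hP : P.PosSemidef)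
    (hQRP : Q = k • R - P) : ∃ Q' ∈ Qset n, Q = k • R - (k - 1) • Q' := by
  have hk' : k - 1 ≠ 0 := sub_ne_zero.2 hk.ne'
  refine ⟨(k - 1)⁻¹ • P, ⟨hP.smul (inv_nonneg.2 (sub_nonneg.2 hk.le)), fun j => ?_⟩,
    by rw [smul_inv_smul₀ hk', hQRP]⟩
  have hPj : P j j = ((k - 1 : ℝ) : ℂ) := by
    rw [show P = k • R - Q by rw [hQRP, sub_sub_cancel], Matrix.sub_apply, Matrix.smul_apply,
      apply_self_eq_one_of_mem_Rset hR, hQ.2 j, Complex.real_smul, mul_one, Complex.ofReal_sub,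
      Complex.ofReal_one]
  rw [Matrix.smul_apply, hPj, Complex.real_smul, ← Complex.ofReal_mul, inv_mul_cancel₀ hk',
    Complex.ofReal_one]

theorem stmt14 (k : ℝ) (hk1 : 1 < k) (hk2 : k < 2)
    (hyp : ∀ (n : ℕ), ∀ Q ∈ Qset n, ∃ R ∈ Rset n, ∃ P : Matrix (Fin n) (Fin n) ℂ,
      P.PosSemidef ∧ Q = k • R - P) :
    ∀ (n : ℕ), ∀ Q ∈ Qset n, ∃ Rp ∈ Rset n, ∃ Rm ∈ Rset n,
      Q = (1 / (2 - k)) • Rp - ((k - 1) / (2 - k)) • Rm := by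
  intro n
  set C := image2 (fun p m => (1 / (2 - k)) • p - ((k - 1) / (2 - k)) • m) (Rset n) (Rset n)
    with hC_def
  suffices h : Qset n ⊆ C by
    intro Q hQ
    obtain ⟨Rp, hRp, Rm, hRm, hQ⟩ := h hQ
    exact ⟨Rp, hRp, Rm, hRm, hQ.symm⟩
  have hC : IsCompact C := by
    rw [hC_def, ← image_uncurry_prod]
    exact ((isCompact_Rset n).prod (isCompact_Rset n)).image (by fun_prop)
  have hK : ‖k - 1‖₊ < 1 := by
    rw [← NNReal.coe_lt_one, coe_nnnorm, Real.norm_eq_abs, abs_lt]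
    constructor <;> linarith
  refine subset_of_forall_eq_lipschitzWith_apply hK (isBounded_Qset n) hC.isClosed
    ((Rset_nonempty n).image2 (Rset_nonempty n)) fun Q hQ => ?_
  obtain ⟨R, hR, P, hP, hQRP⟩ := hyp n Q hQ
  obtain ⟨Q', hQ', rfl⟩ := exists_mem_Qset_eq_smul_sub_smul hk1 hQ hR hP hQRP
  refine ⟨Q', hQ', fun c => k • R - (k - 1) • c, ?_, ?_, rfl⟩
  · refine LipschitzWith.of_dist_le_mul fun a b => ?_
    rw [dist_sub_left, dist_smul₀, coe_nnnorm]
  · rintro _ ⟨p, hp, m, hm, rfl⟩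
    obtain ⟨p', hp', m', hm', h⟩ :=
      (convex_Rset n).exists_smul_sub_smul_eq (by linarith) hk2 hR hp hm
    exact ⟨p', hp', m', hm', h⟩
end
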